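/- arXiv:2503.08614 — 2 statements merged into one kernel-verified Lean document; each statement's English description precedes it below -/
import Mathlib

section
/- Let N be a simply connected 2-step nilpotent Lie group and let a be an automorphism of N whose differential (as a linear map on the Lie algebra of N) has no eigenvalue equal to 1. Then for any x in N, there exists x₁ in N such that x₁ · x · a(x₁⁻¹) = 1; equivalently, the affine transformation (a,x) of N is conjugate by a left translation to (a,1). -/
/-!
Let `T = a - 1`, invertible since `1` is not an eigenvalue of `a`. In the BCH model
`x₁ · x · a(x₁⁻¹)` is `x₁ + x - a x₁` plus half a sum of brackets. For `x₁ = y` with `T y = x`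
the linear part vanishes and `½⁅y, x⁆` remains. This lies in the derived algebra, which is
central and `a`-invariant, so it is cancelled by shifting `y` by the solution `c` of
`T c = ½⁅y, x⁆` in the derived algebra (`T` is injective there, hence onto).
-/

theorem Module.End.injective_sub_smul_one_of_not_hasEigenvalue {R M : Type*} [CommRing R]
    [AddCommGroup M] [Module R M] {f : End R M} {μ : R} (h : ¬ f.HasEigenvalue μ) :
    Function.Injective (f - μ • (1 : End R M)) := by
  rw [← LinearMap.ker_eq_bot, ← eigenspace_def]
  simpa [hasEigenvalue_iff] using h

namespace LieAlgebra

variable {R L : Type*} [CommRing R] [LieRing L] [LieAlgebra R L]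

theorem lie_mem_derivedSeries_one (u v : L) : ⁅u, v⁆ ∈ derivedSeries R L 1 := by
  rw [derivedSeries_def, derivedSeriesOfIdeal_succ, derivedSeriesOfIdeal_zero]
  exact LieSubmodule.lie_mem_lie (LieSubmodule.mem_top u) (LieSubmodule.mem_top v)

theorem derivedSeries_one_le_center (h2step : ∀ x y z : L, ⁅⁅x, y⁆, z⁆ = 0) :
    derivedSeries R L 1 ≤ center R L := by
  rw [derivedSeries_def, derivedSeriesOfIdeal_succ, derivedSeriesOfIdeal_zero,
    LieSubmodule.lie_le_iff]
  intro u _ v _ w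
  rw [← lie_skew, h2step, neg_zero]

theorem bch_mul_mul_of_twoStep (h2step : ∀ x y z : L, ⁅⁅x, y⁆, z⁆ = 0) (r : R) (u v w : L) :
    (u + v + r • ⁅u, v⁆) + w + r • ⁅u + v + r • ⁅u, v⁆, w⁆ =
      u + v + w + r • (⁅u, v⁆ + ⁅u, w⁆ + ⁅v, w⁆) := by
  simp only [add_lie, smul_lie, h2step, smul_zero, add_zero, smul_add]
  abel

theorem bch_conj_eq_zero_of_twoStep (h2step : ∀ x y z : L, ⁅⁅x, y⁆, z⁆ = 0) (a : L →ₗ⁅R⁆ L)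
    (r : R) {x y c : L} (hy : a y = y + x) (hc : ∀ w : L, ⁅w, c⁆ = 0)
    (hac : a c = c + r • ⁅y, x⁆) :
    y + c + x + a (-(y + c)) +
      r • (⁅y + c, x⁆ + ⁅y + c, a (-(y + c))⁆ + ⁅x, a (-(y + c))⁆) = 0 := by
  have hc' : ∀ w : L, ⁅c, w⁆ = 0 := fun w => by rw [← lie_skew, hc, neg_zero]
  have h2step' : ∀ u v w : L, ⁅w, ⁅u, v⁆⁆ = 0 := fun u v w => by
    rw [← lie_skew, h2step, neg_zero]
  rw [map_neg, map_add, hy, hac]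
  simp only [lie_add, add_lie, lie_neg, lie_smul, hc, hc', h2step', lie_self, smul_zero,
    add_zero, zero_add]
  rw [← lie_skew x y]
  module

end LieAlgebra

theorem stmt0_general {L : Type*} [LieRing L] [LieAlgebra ℝ L] [FiniteDimensional ℝ L]
    (h2step : ∀ x y z : L, ⁅⁅x, y⁆, z⁆ = 0)
    (mul : L → L → L) (hmul : ∀ x y : L, mul x y = x + y + (2⁻¹ : ℝ) • ⁅x, y⁆)
    (a : L →ₗ⁅ℝ⁆ L)
    (hev : ¬ Module.End.HasEigenvalue (a : L →ₗ[ℝ] L) 1)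
    (x : L) :
    ∃ x₁ : L, mul (mul x₁ x) (a (-x₁)) = 0 := by
  set T : Module.End ℝ L := (a : L →ₗ[ℝ] L) - (1 : ℝ) • 1
  have hT : Function.Injective T := Module.End.injective_sub_smul_one_of_not_hasEigenvalue hev
  set D : Submodule ℝ L := (LieAlgebra.derivedSeries ℝ L 1).toSubmodule
  have hTD : ∀ z ∈ D, T z ∈ D := fun z hz =>
    sub_mem (LieIdeal.derivedSeries_map_le 1 (LieIdeal.mem_map hz)) (by simpa using hz)
  obtain ⟨y, hy⟩ := LinearMap.surjective_of_injective hT x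
  have hyxD : (2⁻¹ : ℝ) • ⁅y, x⁆ ∈ D := D.smul_mem _ (LieAlgebra.lie_mem_derivedSeries_one y x)
  obtain ⟨c, hcD, hc⟩ := (LinearMap.injOn_iff_surjOn hTD).mp hT.injOn hyxD
  refine ⟨y + c, ?_⟩
  rw [hmul, hmul, LieAlgebra.bch_mul_mul_of_twoStep h2step]
  refine LieAlgebra.bch_conj_eq_zero_of_twoStep h2step a _ ?_ ?_ ?_
  · rw [← hy]; simp [T]
  · exact (LieModule.mem_maxTrivSubmodule ℝ L L c).mp
      (LieAlgebra.derivedSeries_one_le_center h2step hcD)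
  · rw [← hc]; simp [T]

/-- A simply connected 2-step nilpotent Lie group is identified, via the
exponential map, with its Lie algebra `L` endowed with the Baker–Campbell–Hausdorff product
`x * y = x + y + (1/2)⁅x,y⁆` (inverse `-x`, identity `0`).  If `a` is an automorphism of the
group (equivalently of the Lie algebra) having no eigenvalue equal to `1`, then for every `x`
there is `x₁` with `x₁ · x · a(x₁⁻¹) = 1`; i.e. the affine transformation `(a, x)` is conjugate
by a left translation to `(a, 1)`. -/
theorem stmt0 {L : Type*} [LieRing L] [LieAlgebra ℝ L] [FiniteDimensional ℝ L]
    (h2step : ∀ x y z : L, ⁅⁅x, y⁆, z⁆ = 0)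
    (mul : L → L → L) (hmul : ∀ x y : L, mul x y = x + y + (2⁻¹ : ℝ) • ⁅x, y⁆)
    (a : L →ₗ⁅ℝ⁆ L) (ha : Function.Bijective a)
    (hev : ¬ Module.End.HasEigenvalue (a : L →ₗ[ℝ] L) 1)
    (x : L) :
    ∃ x₁ : L, mul (mul x₁ x) (a (-x₁)) = 0 :=
  stmt0_general h2step mul hmul a hev x
end

section
/- Let F be a closed subgroup of a Lie group of the form l ⋉ K, where l ≅ ℝ is a one-parameter subgroup and K is compact, and suppose the projection q : l ⋉ K → l restricted to F is surjective. Then the identity component F° of F also surjects onto l. -/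
/-!
Let `q : F → ℝ` be the projection. As `K` is compact, `q` is proper; as its fibres are the cosets
of `F ∩ K`, which acts on `F` by homeomorphisms, `q` is also open. For a compact interval
`I ∋ 0, t`, the preimage `q⁻¹ I` is then compact and every clopen neighbourhood of `1` in it maps
onto the connected set `I`. In a compact Hausdorff space the component of a point is the
intersection of its clopen neighbourhoods, so by compactness the component of `1` meets `q⁻¹ t`.
Passing to the separation quotient removes the need for `K` to be Hausdorff.
-/

open SemidirectProduct

/-- Product-type topology on a semidirect product. -/
instance sdTop {N A : Type*} [Group N] [Group A] [TopologicalSpace N] [TopologicalSpace A]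
    {φ : A →* MulAut N} : TopologicalSpace (N ⋊[φ] A) :=
  TopologicalSpace.induced (fun g : N ⋊[φ] A => (g.left, g.right)) inferInstance

open Set Topology Pointwise

theorem SeparationQuotient.preimage_connectedComponent_mk {X : Type*} [TopologicalSpace X]
    (x : X) : mk ⁻¹' connectedComponent (mk x) = connectedComponent x := by
  refine isQuotientMap_mk.isCoinducing.preimage_connectedComponent (fun y => ?_) x
  obtain ⟨y, rfl⟩ := surjective_mk y
  refine IsPathConnected.isConnected ⟨y, rfl, fun z hz => ?_⟩
  exact (mk_eq_mk.mp hz).symm.joinedIn rfl hz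

section OpenMapComponents

variable {X Y : Type*} [TopologicalSpace X] [TopologicalSpace Y] [CompactSpace X]
  [T2Space Y] [PreconnectedSpace Y] {f : X → Y}

theorem Continuous.image_connectedComponent_eq_univ_of_t2Space [T2Space X] (hc : Continuous f)
    (ho : IsOpenMap f) (x : X) : f '' connectedComponent x = univ := by
  have hclopen : ∀ V : {V : Set X // IsClopen V ∧ x ∈ V}, f '' V.1 = univ := fun V =>
    IsClopen.eq_univ ⟨hc.isClosedMap _ V.2.1.isClosed, ho _ V.2.1.isOpen⟩ ⟨f x, x, V.2.2, rfl⟩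
  refine eq_univ_of_forall fun y => ?_
  have : Nonempty {V : Set X // IsClopen V ∧ x ∈ V} := ⟨⟨univ, isClopen_univ, mem_univ x⟩⟩
  obtain ⟨z, hz⟩ := IsCompact.nonempty_iInter_of_directed_nonempty_isCompact_isClosed
    (fun V : {V : Set X // IsClopen V ∧ x ∈ V} => V.1 ∩ f ⁻¹' {y})
    (fun V W => ⟨⟨V.1 ∩ W.1, V.2.1.inter W.2.1, V.2.2, W.2.2⟩,
      fun z hz => ⟨hz.1.1, hz.2⟩, fun z hz => ⟨hz.1.2, hz.2⟩⟩)
    (fun V => by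
      obtain ⟨z, hz, hzy⟩ := (hclopen V).symm ▸ mem_univ y
      exact ⟨z, hz, hzy⟩)
    (fun V => (V.2.1.isClosed.inter (isClosed_singleton.preimage hc)).isCompact)
    (fun V => V.2.1.isClosed.inter (isClosed_singleton.preimage hc))
  rw [mem_iInter] at hz
  refine ⟨z, ?_, (hz ⟨univ, isClopen_univ, mem_univ x⟩).2⟩
  rw [connectedComponent_eq_iInter_isClopen, mem_iInter]
  exact fun V => (hz V).1

open SeparationQuotient in
theorem Continuous.image_connectedComponent_eq_univ [R1Space X] (hc : Continuous f)
    (ho : IsOpenMap f) (x : X) : f '' connectedComponent x = univ := by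
  have : CompactSpace (SeparationQuotient X) := surjective_mk.compactSpace continuous_mk
  set g : SeparationQuotient X → Y := lift f fun _ _ h => (h.map hc).eq
  have hg : Continuous g := continuous_lift_iff.mpr hc
  have hg' : IsOpenMap g := fun U hU => by
    rw [← image_preimage_eq U surjective_mk, ← image_comp]
    exact ho _ (hU.preimage continuous_mk)
  calc f '' connectedComponent x = g '' (SeparationQuotient.mk '' (SeparationQuotient.mk ⁻¹'
        connectedComponent (SeparationQuotient.mk x))) := by
        rw [preimage_connectedComponent_mk, image_image]; rfl
    _ = univ := by
        rw [image_preimage_eq _ surjective_mk]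
        exact hg.image_connectedComponent_eq_univ_of_t2Space hg' _

end OpenMapComponents

theorem IsProperMap.subset_image_connectedComponent {X Y : Type*} [TopologicalSpace X]
    [TopologicalSpace Y] [R1Space X] [T2Space Y] {f : X → Y} (hf : IsProperMap f)
    (hfo : IsOpenMap f) {S : Set Y} (hS : IsCompact S) (hSc : IsPreconnected S) {x : X}
    (hx : f x ∈ S) : S ⊆ f '' connectedComponent x := by
  have : CompactSpace (f ⁻¹' S) := isCompact_iff_compactSpace.mp (hf.isCompact_preimage hS)
  have : PreconnectedSpace S := Subtype.preconnectedSpace hSc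
  have h := (hf.continuous.restrictPreimage (s := S)).image_connectedComponent_eq_univ
    (hfo.restrictPreimage S) ⟨x, hx⟩
  intro y hy
  obtain ⟨z, hz, hzy⟩ := h.symm ▸ mem_univ (⟨y, hy⟩ : S)
  exact ⟨z, continuous_subtype_val.image_connectedComponent_subset _ ⟨z, hz, rfl⟩,
    congrArg Subtype.val hzy⟩

theorem Topology.IsQuotientMap.isOpenMap_of_fibers_eq_orbits {G X Y : Type*} [Group G]
    [TopologicalSpace X] [TopologicalSpace Y] [MulAction G X] [ContinuousConstSMul G X]
    {f : X → Y} (hf : IsQuotientMap f)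
    (hfib : ∀ x y, f x = f y ↔ y ∈ MulAction.orbit G x) : IsOpenMap f := by
  intro U hU
  have : f ⁻¹' (f '' U) = ⋃ g : G, g • U := by
    ext y
    simp only [mem_preimage, mem_image, mem_iUnion]
    constructor
    · rintro ⟨x, hx, hxy⟩
      obtain ⟨g, rfl⟩ := (hfib x y).mp hxy
      exact ⟨g, smul_mem_smul_set hx⟩
    · rintro ⟨g, x, hx, rfl⟩
      exact ⟨x, hx, (hfib _ _).mpr (MulAction.mem_orbit x g)⟩
  exact hf.isOpen_preimage.mp (this ▸ isOpen_iUnion fun g => hU.smul g)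

namespace SemidirectProduct

variable {K A : Type*} [Group K] [Group A] [TopologicalSpace K] [TopologicalSpace A]
  {φ : A →* MulAut K}

def homeomorphProd : K ⋊[φ] A ≃ₜ K × A := equivProd.toHomeomorphOfIsInducing ⟨rfl⟩

instance [R1Space K] [R1Space A] : R1Space (K ⋊[φ] A) := R1Space.induced _

theorem continuous_left : Continuous (left : K ⋊[φ] A → K) :=
  continuous_fst.comp homeomorphProd.continuous

theorem continuous_right : Continuous (right : K ⋊[φ] A → A) :=
  continuous_snd.comp homeomorphProd.continuous

theorem isProperMap_right [CompactSpace K] : IsProperMap (right : K ⋊[φ] A → A) :=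
  isProperMap_snd_of_compactSpace.comp homeomorphProd.isProperMap

/- `φ` need not be continuous, so `K ⋊[φ] A` need not be a topological group; left translations
by elements of `K` are nevertheless continuous. -/
theorem continuous_mul_left_of_right_eq_one [ContinuousMul K] {c : K ⋊[φ] A}
    (hc : c.right = 1) : Continuous (c * ·) := by
  refine continuous_induced_rng.mpr ?_
  convert ((continuous_const (y := c.left)).mul continuous_left).prodMk continuous_right using 1
  funext g
  simp [hc]

theorem isOpenMap_right_restrict [CompactSpace K] [ContinuousMul K]
    {F : Subgroup (K ⋊[φ] A)} (hF : IsClosed (F : Set (K ⋊[φ] A)))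
    (hsurj : ∀ a, ∃ g ∈ F, right g = a) : IsOpenMap fun g : F => right (g : K ⋊[φ] A) := by
  set ψ : F →* A := rightHom.comp F.subtype
  have : ContinuousConstSMul ψ.ker F := ⟨fun n =>
    ((continuous_mul_left_of_right_eq_one n.2).comp continuous_subtype_val).subtype_mk _⟩
  refine IsQuotientMap.isOpenMap_of_fibers_eq_orbits (G := ψ.ker)
    ((isProperMap_right.restrict hF).isClosedMap.isQuotientMap
      (continuous_right.comp continuous_subtype_val) fun a => ?_) fun x y => ?_
  · obtain ⟨g, hg, rfl⟩ := hsurj a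
    exact ⟨⟨g, hg⟩, rfl⟩
  · constructor
    · intro h
      exact ⟨⟨y * x⁻¹, by simp [ψ, h]⟩, inv_mul_cancel_right y x⟩
    · rintro ⟨n, rfl⟩
      show ψ x = ψ (n * x)
      rw [map_mul, n.2, one_mul]

end SemidirectProduct

/-- Let `F` be a closed subgroup of a group of the form `l ⋉ K`, where
`l ≅ ℝ` is a one-parameter subgroup and `K` is compact, and suppose the projection
`q : l ⋉ K → l` restricted to `F` is surjective.  Then the identity component `F°` of `F`
also surjects onto `l`. -/
theorem stmt19 {K : Type*} [Group K] [TopologicalSpace K] [IsTopologicalGroup K] [CompactSpace K]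
    (φ : Multiplicative ℝ →* MulAut K)
    (F : Subgroup (K ⋊[φ] Multiplicative ℝ))
    (hclosed : IsClosed (F : Set (K ⋊[φ] Multiplicative ℝ)))
    (hsurj : ∀ t : Multiplicative ℝ, ∃ g ∈ F, SemidirectProduct.right g = t) :
    ∀ t : Multiplicative ℝ, ∃ g : F,
      SemidirectProduct.right (g : K ⋊[φ] Multiplicative ℝ) = t ∧
      g ∈ connectedComponent (1 : F) := by
  intro t
  obtain ⟨g, hg, hgt⟩ := (isProperMap_right.restrict hclosed).subset_image_connectedComponent
    (isOpenMap_right_restrict hclosed hsurj) (isCompact_uIcc.image continuous_ofAdd)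
    (isPreconnected_uIcc.image _ continuous_ofAdd.continuousOn) (x := 1)
    ⟨0, left_mem_uIcc, rfl⟩ ⟨t.toAdd, right_mem_uIcc, rfl⟩
  exact ⟨g, hgt, hg⟩
end
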